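/- Suppose G acts continuously and properly on M, preserving the Radon measure μ. Then for all continuous compactly supported s₁, s₂ : M → H, the function F : G → ℂ defined by F(g) := ⟨s₁, g·s₂⟩_{L²} = ∫_M ⟨s₁(m), ρ(g)(s₂(g⁻¹•m))⟩_H dμ(m) is continuous and compactly supported; its support is contained in the compact set {g ∈ G : (g•supp s₂) ∩ supp s₁ ≠ ∅}. -/

import Mathlib

open MeasureTheory Pointwise Function

/-
Everything follows from the joint continuity of `(g, m) ↦ ⟪s₁ m, ρ g (s₂ (g⁻¹ • m))⟫`: a strongly
continuous family of isometries is jointly continuous, being equi-Lipschitz. The integrand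
vanishes unless `m ∈ tsupport s₁`, a compact set, so the parametric integral is continuous; it
vanishes identically unless `g • tsupport s₂` meets `tsupport s₁`, and properness of the action
makes that set of `g` compact.
-/

theorem LinearIsometryEquiv.continuous_uncurry_of_continuous_apply
    {X R E F : Type*} [TopologicalSpace X] [Semiring R]
    [SeminormedAddCommGroup E] [SeminormedAddCommGroup F] [Module R E] [Module R F]
    (Φ : X → E ≃ₗᵢ[R] F) (hΦ : ∀ v, Continuous fun x => Φ x v) :
    Continuous fun p : X × E => Φ p.1 p.2 :=
  continuous_prod_of_continuous_lipschitzWith' (fun p : X × E => Φ p.1 p.2) 1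
    (fun x => (Φ x).lipschitz) hΦ

section Translate

variable {G M 𝕜 H : Type*} [Group G] [TopologicalSpace M] [MulAction G M]
  [RCLike 𝕜] [NormedAddCommGroup H] [InnerProductSpace 𝕜 H]

theorem continuous_inner_translate [TopologicalSpace G] [ContinuousInv G] [ContinuousSMul G M]
    (ρ : G → H ≃ₗᵢ[𝕜] H) (hρ : ∀ v, Continuous fun g => ρ g v)
    {s₁ s₂ : M → H} (h₁ : Continuous s₁) (h₂ : Continuous s₂) :
    Continuous fun p : G × M => (inner 𝕜 (s₁ p.2) (ρ p.1 (s₂ (p.1⁻¹ • p.2))) : 𝕜) :=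
  (h₁.comp continuous_snd).inner <|
    (LinearIsometryEquiv.continuous_uncurry_of_continuous_apply ρ hρ).comp <|
      continuous_fst.prodMk <| h₂.comp <| continuous_fst.inv.smul continuous_snd

theorem inner_translate_eq_zero_of_not_inter_nonempty (ρ : G → H ≃ₗᵢ[𝕜] H) {s₁ s₂ : M → H}
    {g : G} (hg : ¬ (g • tsupport s₂ ∩ tsupport s₁).Nonempty) (m : M) :
    (inner 𝕜 (s₁ m) (ρ g (s₂ (g⁻¹ • m))) : 𝕜) = 0 := by
  by_cases hm : m ∈ tsupport s₁
  · have hgm : g⁻¹ • m ∉ tsupport s₂ := fun h =>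
      hg ⟨m, Set.mem_smul_set_iff_inv_smul_mem.mpr h, hm⟩
    rw [image_eq_zero_of_notMem_tsupport hgm, map_zero, inner_zero_right]
  · rw [image_eq_zero_of_notMem_tsupport hm, inner_zero_left]

variable [MeasurableSpace M] (μ : Measure M)

theorem continuous_integral_inner_translate [TopologicalSpace G] [ContinuousInv G]
    [ContinuousSMul G M] [OpensMeasurableSpace M] [IsFiniteMeasureOnCompacts μ]
    (ρ : G → H ≃ₗᵢ[𝕜] H) (hρ : ∀ v, Continuous fun g => ρ g v)
    {s₁ s₂ : M → H} (h₁ : Continuous s₁) (h₁_supp : HasCompactSupport s₁) (h₂ : Continuous s₂) :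
    Continuous fun g : G => ∫ m, (inner 𝕜 (s₁ m) (ρ g (s₂ (g⁻¹ • m))) : 𝕜) ∂μ := by
  rw [← continuousOn_univ]
  refine continuousOn_integral_of_compact_support h₁_supp
    (continuous_inner_translate ρ hρ h₁ h₂).continuousOn fun g m _ hm => ?_
  rw [image_eq_zero_of_notMem_tsupport hm, inner_zero_left]

theorem support_integral_inner_translate_subset (ρ : G → H ≃ₗᵢ[𝕜] H) (s₁ s₂ : M → H) :
    support (fun g : G => ∫ m, (inner 𝕜 (s₁ m) (ρ g (s₂ (g⁻¹ • m))) : 𝕜) ∂μ) ⊆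
      {g : G | (g • tsupport s₂ ∩ tsupport s₁).Nonempty} := by
  intro g hg
  by_contra hempty
  exact hg (by simp only [inner_translate_eq_zero_of_not_inter_nonempty ρ hempty, integral_zero])

end Translate

theorem pairing_continuous_compactly_supported_general
    {G : Type*} [Group G] [TopologicalSpace G] [IsTopologicalGroup G]
    {M : Type*} [TopologicalSpace M]
    [MulAction G M]
    [MeasurableSpace M] [BorelSpace M]
    (μ : Measure M) [μ.Regular]
    {H : Type*} [NormedAddCommGroup H] [InnerProductSpace ℂ H]
    (ρ : G →* (H ≃ₗᵢ[ℂ] H)) (hρ : ∀ v : H, Continuous fun g : G => ρ g v)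
    (hproper : IsProperMap (fun p : G × M => (p.1 • p.2, p.2)))
    (s₁ s₂ : M → H)
    (h₁_cont : Continuous s₁) (h₁_supp : HasCompactSupport s₁)
    (h₂_cont : Continuous s₂) (h₂_supp : HasCompactSupport s₂) :
    Continuous (fun g : G => ∫ m, (inner ℂ (s₁ m) (ρ g (s₂ (g⁻¹ • m))) : ℂ) ∂μ) ∧
    IsCompact {g : G | ((g • tsupport s₂) ∩ tsupport s₁).Nonempty} ∧
    Function.support (fun g : G => ∫ m, (inner ℂ (s₁ m) (ρ g (s₂ (g⁻¹ • m))) : ℂ) ∂μ) ⊆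
      {g : G | ((g • tsupport s₂) ∩ tsupport s₁).Nonempty} ∧
    HasCompactSupport (fun g : G => ∫ m, (inner ℂ (s₁ m) (ρ g (s₂ (g⁻¹ • m))) : ℂ) ∂μ) := by
  have : ProperSMul G M := ⟨hproper⟩
  have hcompact : IsCompact {g : G | ((g • tsupport s₂) ∩ tsupport s₁).Nonempty} :=
    ProperSMul.isCompact_setOfPred_inter_nonempty h₂_supp h₁_supp
  have hsupport := support_integral_inner_translate_subset μ ρ s₁ s₂
  refine ⟨continuous_integral_inner_translate μ ρ hρ h₁_cont h₁_supp h₂_cont, hcompact, hsupport,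
    HasCompactSupport.intro hcompact fun g hg => ?_⟩
  exact notMem_support.mp (mt (@hsupport g) hg)

/-- For a continuous proper measure-preserving action, the pairing
`F(g) = ⟨s₁, g·s₂⟩_{L²}` of continuous compactly supported `H`-valued functions is
continuous and compactly supported, with support contained in the compact transporter set
`{g : G | (g • supp s₂) ∩ supp s₁ ≠ ∅}`. -/
theorem pairing_continuous_compactly_supported
    {G : Type*} [Group G] [TopologicalSpace G] [IsTopologicalGroup G]
    [LocallyCompactSpace G] [T2Space G] [MeasurableSpace G] [BorelSpace G]
    (μG : Measure G) [μG.IsHaarMeasure] [μG.IsMulRightInvariant]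
    {M : Type*} [TopologicalSpace M] [LocallyCompactSpace M] [T2Space M]
    [MulAction G M] [ContinuousSMul G M]
    [MeasurableSpace M] [BorelSpace M]
    (μ : Measure M) [μ.Regular] [SMulInvariantMeasure G M μ]
    {H : Type*} [NormedAddCommGroup H] [InnerProductSpace ℂ H] [CompleteSpace H]
    (ρ : G →* (H ≃ₗᵢ[ℂ] H)) (hρ : ∀ v : H, Continuous fun g : G => ρ g v)
    (hproper : IsProperMap (fun p : G × M => (p.1 • p.2, p.2)))
    (s₁ s₂ : M → H)
    (h₁_cont : Continuous s₁) (h₁_supp : HasCompactSupport s₁)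
    (h₂_cont : Continuous s₂) (h₂_supp : HasCompactSupport s₂) :
    Continuous (fun g : G => ∫ m, (inner ℂ (s₁ m) (ρ g (s₂ (g⁻¹ • m))) : ℂ) ∂μ) ∧
    IsCompact {g : G | ((g • tsupport s₂) ∩ tsupport s₁).Nonempty} ∧
    Function.support (fun g : G => ∫ m, (inner ℂ (s₁ m) (ρ g (s₂ (g⁻¹ • m))) : ℂ) ∂μ) ⊆
      {g : G | ((g • tsupport s₂) ∩ tsupport s₁).Nonempty} ∧
    HasCompactSupport (fun g : G => ∫ m, (inner ℂ (s₁ m) (ρ g (s₂ (g⁻¹ • m))) : ℂ) ∂μ) :=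
  pairing_continuous_compactly_supported_general μ ρ hρ hproper s₁ s₂ h₁_cont h₁_supp h₂_cont
    h₂_supp
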